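/- arXiv:cs/0302022 — 4 statements merged into one kernel-verified Lean document; each statement's English description precedes it below -/
import Mathlib

section
/- Let c ≥ 0 and let x₁,…,xₙ be nonnegative reals with sum M, at least one of which exceeds c. Let B = {i : xᵢ > c}. Then (∑_{i∈B} xᵢ·ln xᵢ) / (∑_{i∈B} xᵢ) ≥ ln(max(c, M/n)). -/
/-!
By Jensen's inequality for the convex function `x ↦ x log x` with uniform weights on `B`,
the `x`-weighted mean of `log x` over `B` is at least `log` of the plain mean of `x` over `B`.
That mean exceeds `c`, and it is at least the overall mean `M / n` because every entry in `B`
dominates every entry outside it.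
-/

open Finset Real

theorem Finset.sum_div_card_le_sum_div_card_of_le {ι 𝕜 : Type*} [Fintype ι] [DecidableEq ι]
    [Field 𝕜] [LinearOrder 𝕜] [IsStrictOrderedRing 𝕜] {s : Finset ι} (hs : s.Nonempty) {x : ι → 𝕜}
    (h : ∀ i ∈ s, ∀ j ∉ s, x j ≤ x i) :
    (∑ i, x i) / Fintype.card ι ≤ (∑ i ∈ s, x i) / #s := by
  have hcross : (#s : 𝕜) * ∑ j ∈ sᶜ, x j ≤ #sᶜ * ∑ i ∈ s, x i := by
    calc (#s : 𝕜) * ∑ j ∈ sᶜ, x j = ∑ _i ∈ s, ∑ j ∈ sᶜ, x j := by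
          rw [sum_const, nsmul_eq_mul]
      _ ≤ ∑ i ∈ s, ∑ _j ∈ sᶜ, x i :=
          sum_le_sum fun i hi => sum_le_sum fun j hj => h i hi j (mem_compl.mp hj)
      _ = #sᶜ * ∑ i ∈ s, x i := by simp only [sum_const, nsmul_eq_mul, mul_sum]
  have hcard : (Fintype.card ι : 𝕜) = #s + #sᶜ := by
    rw [← card_add_card_compl s, Nat.cast_add]
  rw [← sum_add_sum_compl s x, hcard, div_le_div_iff₀ (by positivity) (by positivity)]
  linarith

theorem Real.sum_mul_log_sum_div_card_le {ι : Type*} {s : Finset ι} (hs : s.Nonempty) {x : ι → ℝ}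
    (hx : ∀ i ∈ s, 0 ≤ x i) :
    (∑ i ∈ s, x i) * log ((∑ i ∈ s, x i) / #s) ≤ ∑ i ∈ s, x i * log (x i) := by
  have hk : (0 : ℝ) < #s := by exact_mod_cast hs.card_pos
  have := convexOn_mul_log.map_sum_le (t := s) (w := fun _ => (#s : ℝ)⁻¹) (p := x)
    (fun _ _ => by positivity) (by simp [hk.ne']) hx
  simp only [smul_eq_mul, inv_mul_eq_div, ← sum_div] at this
  rwa [div_mul_eq_mul_div, div_le_div_iff_of_pos_right hk] at this

open Finset in
theorem conditional_convex_lower_bound_general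
    (n : ℕ) (c : ℝ) (hc : 0 ≤ c) (x : Fin n → ℝ)
    (hx : ∀ i, 0 ≤ x i) (M : ℝ) (hM : ∑ i, x i = M)
    (hex : ∃ i, x i > c) :
    (∑ i ∈ Finset.univ.filter (fun i => x i > c), x i * Real.log (x i)) /
      (∑ i ∈ Finset.univ.filter (fun i => x i > c), x i)
      ≥ Real.log (max c (M / n)) := by
  set B := univ.filter (fun i => x i > c)
  obtain ⟨i₀, hi₀⟩ := hex
  have hB : B.Nonempty := ⟨i₀, mem_filter.mpr ⟨mem_univ _, hi₀⟩⟩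
  have hBc : ∀ i ∈ B, c < x i := fun i hi => (mem_filter.mp hi).2
  have hS : 0 < ∑ i ∈ B, x i := sum_pos (fun i hi => hc.trans_lt (hBc i hi)) hB
  have hc_le : c ≤ (∑ i ∈ B, x i) / #B := by
    rw [le_div_iff₀ (by exact_mod_cast hB.card_pos)]
    simpa [mul_comm] using B.card_nsmul_le_sum x c fun i hi => (hBc i hi).le
  have hM_le : M / n ≤ (∑ i ∈ B, x i) / #B := by
    simpa [hM] using sum_div_card_le_sum_div_card_of_le hB fun i hi j hj =>
      (not_lt.mp fun h => hj (mem_filter.mpr ⟨mem_univ _, h⟩)).trans (hBc i hi).le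
  have hM_pos : 0 < M := hM ▸ hS.trans_le (sum_le_univ_sum_of_nonneg hx)
  have hmax : 0 < max c (M / n) := lt_max_of_lt_right (div_pos hM_pos (by exact_mod_cast i₀.pos))
  rw [ge_iff_le, le_div_iff₀ hS]
  calc log (max c (M / n)) * ∑ i ∈ B, x i ≤ log ((∑ i ∈ B, x i) / #B) * ∑ i ∈ B, x i := by
        gcongr; exact max_le hc_le hM_le
    _ ≤ ∑ i ∈ B, x i * log (x i) := by
        rw [mul_comm]; exact sum_mul_log_sum_div_card_le hB fun i _ => hx i

open Finset in
theorem conditional_convex_lower_bound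
    (n : ℕ) (hn : 1 ≤ n) (c : ℝ) (hc : 0 ≤ c) (x : Fin n → ℝ)
    (hx : ∀ i, 0 ≤ x i) (M : ℝ) (hM : ∑ i, x i = M)
    (hex : ∃ i, x i > c) :
    (∑ i ∈ Finset.univ.filter (fun i => x i > c), x i * Real.log (x i)) /
      (∑ i ∈ Finset.univ.filter (fun i => x i > c), x i)
      ≥ Real.log (max c (M / n)) :=
  conditional_convex_lower_bound_general n c hc x hx M hM hex
end

section
/- Let S be a nonempty finite set of states and let a transition rule choose, conditional on a random finite set Δ of offsets with E[|Δ|] ≤ ℓ, one of at most 3|Δ| subranges of S, each subrange of size m being chosen with probability m/|S|. Then for any a ≥ 1, the probability that the chosen subrange has size at most |S|/a is at most 3ℓ/a. -/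
/-! Each subrange of size at most `N / a` is picked with probability at most `1 / a`, and there
are at most `3 |Δ|` subranges, so conditionally on `Δ` the event has probability at most
`3 |Δ| / a`; averaging over `Δ` gives `3 E|Δ| / a ≤ 3 ℓ / a`. -/

open Finset

lemma ite_le_div_div_le_inv {x N a : ℝ} (hx : 0 ≤ x) (ha : 0 < a) :
    (if x ≤ N / a then x / N else 0) ≤ a⁻¹ := by
  split_ifs with h
  · rcases le_or_gt N 0 with hN | hN
    · have hx0 : x = 0 := le_antisymm (h.trans (div_nonpos_of_nonpos_of_nonneg hN ha.le)) hx
      simp [hx0, ha.le]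
    · rw [div_le_iff₀ hN]
      calc x ≤ N / a := h
        _ = a⁻¹ * N := by rw [div_eq_inv_mul]
  · positivity

lemma sum_ite_le_div_div_le {ι : Type*} (s : Finset ι) (f : ι → ℝ) (hf : ∀ j, 0 ≤ f j)
    (N : ℝ) {a : ℝ} (ha : 0 < a) :
    ∑ j ∈ s, (if f j ≤ N / a then f j / N else 0) ≤ s.card / a := by
  calc ∑ j ∈ s, (if f j ≤ N / a then f j / N else 0)
      ≤ ∑ _j ∈ s, a⁻¹ := sum_le_sum fun j _ => ite_le_div_div_le_inv (hf j) ha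
    _ = s.card / a := by rw [sum_const, nsmul_eq_mul, div_eq_mul_inv]

lemma sum_ite_le_div_div_nonneg {ι : Type*} (s : Finset ι) (f : ι → ℝ) (hf : ∀ j, 0 ≤ f j)
    {N : ℝ} (hN : 0 ≤ N) (a : ℝ) :
    0 ≤ ∑ j ∈ s, (if f j ≤ N / a then f j / N else 0) :=
  sum_nonneg fun j _ => by split_ifs <;> positivity [hf j]

lemma tsum_mul_le_const_mul {ι : Type*} {p g h : ι → ℝ} {c ℓ : ℝ} (hp : ∀ i, 0 ≤ p i)
    (hg : ∀ i, 0 ≤ g i) (hgh : ∀ i, g i ≤ c * h i) (hc : 0 ≤ c)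
    (hsum : Summable fun i => p i * h i) (hℓ : ∑' i, p i * h i ≤ ℓ) :
    ∑' i, p i * g i ≤ c * ℓ := by
  have hle : ∀ i, p i * g i ≤ c * (p i * h i) := fun i => by
    calc p i * g i ≤ p i * (c * h i) := mul_le_mul_of_nonneg_left (hgh i) (hp i)
      _ = c * (p i * h i) := by ring
  have hsum' : Summable fun i => c * (p i * h i) := hsum.mul_left c
  calc ∑' i, p i * g i ≤ ∑' i, c * (p i * h i) :=
        (hsum'.of_nonneg_of_le (fun i => mul_nonneg (hp i) (hg i)) hle).tsum_le_tsum hle hsum'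
    _ = c * ∑' i, p i * h i := hsum.tsum_mul_left c
    _ ≤ c * ℓ := mul_le_mul_of_nonneg_left hℓ hc

open Finset in
theorem aggregate_max_drop_general
    (N : ℕ) (ℓ a : ℝ) (ha : 1 ≤ a)
    (p : Finset ℤ → ℝ) (hp0 : ∀ Δ, 0 ≤ p Δ)
    (hcardsum : Summable (fun Δ : Finset ℤ => p Δ * (Δ.card : ℝ)))
    (hE : ∑' Δ : Finset ℤ, p Δ * (Δ.card : ℝ) ≤ ℓ)
    (count : Finset ℤ → ℕ) (hcount : ∀ Δ, count Δ ≤ 3 * Δ.card)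
    (sizes : Finset ℤ → ℕ → ℕ) :
    ∑' Δ : Finset ℤ, p Δ * ∑ j ∈ Finset.range (count Δ),
        (if (sizes Δ j : ℝ) ≤ (N : ℝ) / a then (sizes Δ j : ℝ) / N else 0)
      ≤ 3 * ℓ / a := by
  have ha0 : 0 < a := one_pos.trans_le ha
  have hsizes : ∀ Δ j, (0 : ℝ) ≤ sizes Δ j := fun _ _ => Nat.cast_nonneg _
  have hconditional : ∀ Δ : Finset ℤ, ∑ j ∈ range (count Δ),
      (if (sizes Δ j : ℝ) ≤ (N : ℝ) / a then (sizes Δ j : ℝ) / N else 0)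
        ≤ 3 / a * (Δ.card : ℝ) := fun Δ => by
    calc _ ≤ ((range (count Δ)).card : ℝ) / a :=
          sum_ite_le_div_div_le _ _ (hsizes Δ) _ ha0
      _ ≤ (3 * Δ.card : ℕ) / a := by
          rw [card_range]; gcongr; exact hcount Δ
      _ = 3 / a * (Δ.card : ℝ) := by push_cast; ring
  calc _ ≤ 3 / a * ℓ := tsum_mul_le_const_mul hp0
        (fun Δ => sum_ite_le_div_div_nonneg _ _ (hsizes Δ) N.cast_nonneg a) hconditional
        (by positivity) hcardsum hE
    _ = 3 * ℓ / a := by ring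

open Finset in
theorem aggregate_max_drop
    (N : ℕ) (hN : 1 ≤ N) (ℓ a : ℝ) (ha : 1 ≤ a)
    (p : Finset ℤ → ℝ) (hp0 : ∀ Δ, 0 ≤ p Δ) (hpsum : Summable p)
    (hp1 : ∑' Δ, p Δ = 1)
    (hcardsum : Summable (fun Δ : Finset ℤ => p Δ * (Δ.card : ℝ)))
    (hE : ∑' Δ : Finset ℤ, p Δ * (Δ.card : ℝ) ≤ ℓ)
    (count : Finset ℤ → ℕ) (hcount : ∀ Δ, count Δ ≤ 3 * Δ.card)
    (sizes : Finset ℤ → ℕ → ℕ)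
    (hpart : ∀ Δ, ∑ j ∈ Finset.range (count Δ), sizes Δ j = N) :
    ∑' Δ : Finset ℤ, p Δ * ∑ j ∈ Finset.range (count Δ),
        (if (sizes Δ j : ℝ) ≤ (N : ℝ) / a then (sizes Δ j : ℝ) / N else 0)
      ≤ 3 * ℓ / a :=
  aggregate_max_drop_general N ℓ a ha p hp0 hcardsum hE count hcount sizes
end

section
/- Fix n ≥ 2, and let k be a distance with 1 ≤ k ≤ n. Let n₁, n₂ ≥ k with n₁, n₂ ≤ n, and define S = H_{n₁-k} + H_{n₂+k} where H_m is the m-th harmonic number. Then (1/S)·(k + H_{n₁-k} + H_{n₂+k} - H_{2k}) > k/(2·H_n), provided n₁ - k ≥ 0 and n₂ + k ≥ 2k. -/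
/-!
The harmonic numbers are strictly concave: `H (m + k) - H m` is a sum of `k` reciprocals, each
larger than the matching one in `H (m + 2k) - H (m + k)`. Hence `S ≤ H (n - k) + H (n + k) < 2 H n`,
while the numerator is at least `k` because `H (2k) ≤ H (n₂ + k)`.
-/

open Finset

theorem harmonic_add (a b : ℕ) :
    harmonic (a + b) = harmonic a + ∑ i ∈ range b, ((a + i + 1 : ℕ) : ℚ)⁻¹ := by
  simp only [harmonic, sum_range_add, add_assoc]

theorem harmonic_mono : Monotone harmonic :=
  monotone_nat_of_le_succ fun n => by rw [harmonic_succ]; exact le_add_of_nonneg_right (by positivity)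

theorem harmonic_nonneg (n : ℕ) : 0 ≤ harmonic n :=
  harmonic_zero ▸ harmonic_mono n.zero_le

theorem harmonic_add_add_lt (m : ℕ) {k : ℕ} (hk : 0 < k) :
    harmonic m + harmonic (m + k + k) < 2 * harmonic (m + k) := by
  have hgap : ∑ i ∈ range k, ((m + k + i + 1 : ℕ) : ℚ)⁻¹ < ∑ i ∈ range k, ((m + i + 1 : ℕ) : ℚ)⁻¹ :=
    sum_lt_sum_of_nonempty (nonempty_range_iff.2 hk.ne') fun i _ =>
      inv_strictAnti₀ (by positivity) (by exact_mod_cast (by omega : m + i + 1 < m + k + i + 1))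
  rw [harmonic_add (m + k), harmonic_add m k]
  linarith

theorem harmonic_sub_add_harmonic_add_lt {n k : ℕ} (hk : 0 < k) (hkn : k ≤ n) :
    harmonic (n - k) + harmonic (n + k) < 2 * harmonic n := by
  obtain ⟨m, rfl⟩ := Nat.exists_eq_add_of_le' hkn
  simpa using harmonic_add_add_lt m hk

open Finset in
theorem mu_k_lower_bound_general
    (H : ℕ → ℝ) (hH : ∀ m, H m = ∑ i ∈ Finset.range m, (1 : ℝ) / (i + 1))
    (n k n₁ n₂ : ℕ) (hk1 : 1 ≤ k)
    (hn₁ : n₁ ≤ n) (hn₂k : k ≤ n₂) (hn₂ : n₂ ≤ n)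
    (S : ℝ) (hS : S = H (n₁ - k) + H (n₂ + k)) :
    (1 / S) * ((k : ℝ) + H (n₁ - k) + H (n₂ + k) - H (2 * k)) > k / (2 * H n) := by
  have hH_harmonic (m : ℕ) : H m = harmonic m := by simp [hH, harmonic]
  simp only [hH_harmonic] at hS ⊢
  have hS_lt : S < 2 * harmonic n := by
    have := harmonic_sub_add_harmonic_add_lt hk1 (hn₂k.trans hn₂)
    have := harmonic_mono (Nat.sub_le_sub_right hn₁ k)
    have := harmonic_mono (Nat.add_le_add_right hn₂ k)
    rw [hS]; exact_mod_cast (by linarith : harmonic (n₁ - k) + harmonic (n₂ + k) < 2 * harmonic n)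
  have hS_pos : 0 < S := by
    have := harmonic_nonneg (n₁ - k)
    have := harmonic_pos (n := n₂ + k) (by omega)
    rw [hS]; exact_mod_cast (by linarith : 0 < harmonic (n₁ - k) + harmonic (n₂ + k))
  have hk_le : (k : ℝ) ≤ k + harmonic (n₁ - k) + harmonic (n₂ + k) - harmonic (2 * k) := by
    have := harmonic_nonneg (n₁ - k)
    have := harmonic_mono (by omega : 2 * k ≤ n₂ + k)
    exact_mod_cast (by linarith : (k : ℚ) ≤ _)
  have hk_pos : (0 : ℝ) < k := by exact_mod_cast hk1
  calc (k : ℝ) / (2 * harmonic n) < k / S := div_lt_div_of_pos_left hk_pos hS_pos hS_lt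
    _ ≤ _ := by rw [one_div_mul_eq_div]; exact div_le_div_of_nonneg_right hk_le hS_pos.le

open Finset in
theorem mu_k_lower_bound
    (H : ℕ → ℝ) (hH : ∀ m, H m = ∑ i ∈ Finset.range m, (1 : ℝ) / (i + 1))
    (n k n₁ n₂ : ℕ) (hn : 2 ≤ n) (hk1 : 1 ≤ k) (hkn : k ≤ n)
    (hn₁k : k ≤ n₁) (hn₁ : n₁ ≤ n) (hn₂k : k ≤ n₂) (hn₂ : n₂ ≤ n)
    (S : ℝ) (hS : S = H (n₁ - k) + H (n₂ + k)) :
    (1 / S) * ((k : ℝ) + H (n₁ - k) + H (n₂ + k) - H (2 * k)) > k / (2 * H n) :=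
  mu_k_lower_bound_general H hH n k n₁ n₂ hk1 hn₁ hn₂k hn₂ S hS
end

section
/- Let (b_k)_{k∈ℤ} be the convolution of a nonnegative, symmetric (p_{-k} = p_k), unimodal (nonincreasing for k ≥ 0) summable sequence (p_k) with itself: b_k = ∑_{i∈ℤ} p_{k-i}·p_i. Then (b_k) is also symmetric and unimodal: b_{-k} = b_k for all k, and b_k ≥ b_{k'} whenever 0 ≤ k < k'. -/
/-!
Write `b_k - b_{k+1} = ∑_j p_{k-j} (p_j - p_{j+1})` by shifting the index of the second sum.
Grouping the terms `j = n` and `j = -n-1` (`n ≥ 0`) and using symmetry, this becomes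
`∑_{n ≥ 0} (p_{k-n} - p_{k+n+1}) (p_n - p_{n+1})`, a sum of products of two nonnegative factors
because `|k - n| ≤ k + n + 1`.
-/

open Set

structure IsSymmUnimodal (p : ℤ → ℝ) : Prop where
  neg_apply : ∀ k, p (-k) = p k
  add_one_le : ∀ k, 0 ≤ k → p (k + 1) ≤ p k

noncomputable def intConv (p q : ℤ → ℝ) (k : ℤ) : ℝ := ∑' i, p (k - i) * q i

section

variable {p q : ℤ → ℝ}

lemma intConv_add_one (k : ℤ) :
    intConv p q (k + 1) = ∑' j, p (k - j) * q (j + 1) := by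
  rw [intConv, ← (Equiv.addRight (1 : ℤ)).tsum_eq]
  simp [add_sub_add_right_eq_sub]

lemma summable_sub_mul_add_one (hs : ∀ k, Summable fun i => p (k - i) * q i)
    (k : ℤ) : Summable fun j => p (k - j) * q (j + 1) := by
  have := (Equiv.addRight (1 : ℤ)).summable_iff.mpr (hs (k + 1))
  simpa [Function.comp_def, add_sub_add_right_eq_sub] using this

lemma intConv_sub_intConv_add_one (hs : ∀ k, Summable fun i => p (k - i) * q i) (k : ℤ) :
    intConv p q k - intConv p q (k + 1) = ∑' j, p (k - j) * (q j - q (j + 1)) := by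
  rw [intConv_add_one, intConv,
    ← (hs k).tsum_sub (summable_sub_mul_add_one hs k)]
  simp only [mul_sub]

namespace IsSymmUnimodal

lemma antitoneOn (hp : IsSymmUnimodal p) : AntitoneOn p (Ici 0) :=
  antitoneOn_of_add_one_le ordConnected_Ici fun a _ ha _ => hp.add_one_le a ha

lemma apply_abs (hp : IsSymmUnimodal p) (k : ℤ) : p |k| = p k := by
  rcases abs_choice k with h | h <;> simp [h, hp.neg_apply]

lemma le_of_abs_le (hp : IsSymmUnimodal p) {i j : ℤ} (h : |i| ≤ |j|) : p j ≤ p i := by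
  rw [← hp.apply_abs i, ← hp.apply_abs j]
  exact hp.antitoneOn (abs_nonneg i) (abs_nonneg j) h

lemma le_apply_zero (hp : IsSymmUnimodal p) (k : ℤ) : p k ≤ p 0 :=
  hp.le_of_abs_le (by simp)

lemma summable_mul_sub (hp : IsSymmUnimodal p) (hp0 : ∀ k, 0 ≤ p k) (hq0 : ∀ k, 0 ≤ q k)
    (hq : Summable q) (k : ℤ) : Summable fun i => p (k - i) * q i :=
  (hq.mul_left (p 0)).of_nonneg_of_le (fun i => mul_nonneg (hp0 _) (hq0 i))
    fun i => mul_le_mul_of_nonneg_right (hp.le_apply_zero _) (hq0 i)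

lemma intConv_neg (hp : IsSymmUnimodal p) (hq : IsSymmUnimodal q) (k : ℤ) :
    intConv p q (-k) = intConv p q k := by
  rw [intConv, ← (Equiv.neg ℤ).tsum_eq]
  refine tsum_congr fun i => ?_
  rw [Equiv.neg_apply, hq.neg_apply, show -k - -i = -(k - i) by ring, hp.neg_apply]

lemma intConv_add_one_le (hp : IsSymmUnimodal p) (hq : IsSymmUnimodal q)
    (hs : ∀ k, Summable fun i => p (k - i) * q i) {k : ℤ} (hk : 0 ≤ k) :
    intConv p q (k + 1) ≤ intConv p q k := by
  have hsum : Summable fun j => p (k - j) * (q j - q (j + 1)) := by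
    simpa only [mul_sub] using (hs k).sub (summable_sub_mul_add_one hs k)
  rw [← sub_nonneg, intConv_sub_intConv_add_one hs, ← tsum_nat_add_neg_add_one hsum]
  refine tsum_nonneg fun n => ?_
  have pair : p (k - n) * (q n - q (n + 1))
        + p (k - -(n + 1)) * (q (-(n + 1)) - q (-(n + 1) + 1))
      = (p (k - n) - p (k + n + 1)) * (q n - q (n + 1)) := by
    rw [hq.neg_apply, show -((n : ℤ) + 1) + 1 = -n by ring, hq.neg_apply,
      show k - -((n : ℤ) + 1) = k + n + 1 by ring]
    ring
  have habs : |k - n| ≤ |k + n + 1| := by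
    rw [abs_of_nonneg (by omega : (0 : ℤ) ≤ k + n + 1)]
    exact abs_le.2 ⟨by omega, by omega⟩
  rw [pair]
  exact mul_nonneg (sub_nonneg.2 (hp.le_of_abs_le habs))
    (sub_nonneg.2 (hq.add_one_le n n.cast_nonneg))

lemma intConv (hp : IsSymmUnimodal p) (hq : IsSymmUnimodal q)
    (hs : ∀ k, Summable fun i => p (k - i) * q i) : IsSymmUnimodal (intConv p q) :=
  ⟨hp.intConv_neg hq, fun _ hk => hp.intConv_add_one_le hq hs hk⟩

end IsSymmUnimodal

end

theorem autoconvolution_symmetric_unimodal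
    (p : ℤ → ℝ) (hnn : ∀ k, 0 ≤ p k) (hsym : ∀ k, p (-k) = p k)
    (huni : ∀ k : ℤ, 0 ≤ k → p (k + 1) ≤ p k) (hsum : Summable p)
    (b : ℤ → ℝ) (hb : ∀ k, b k = ∑' i : ℤ, p (k - i) * p i) :
    (∀ k, b (-k) = b k) ∧ (∀ k k' : ℤ, 0 ≤ k → k < k' → b k' ≤ b k) := by
  have hp : IsSymmUnimodal p := ⟨hsym, huni⟩
  obtain rfl : b = intConv p p := funext hb
  have hconv := hp.intConv hp (hp.summable_mul_sub hnn hnn hsum)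
  exact ⟨hconv.neg_apply, fun k k' hk hkk' => hconv.antitoneOn hk (hk.trans hkk'.le) hkk'.le⟩
end
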